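/- Let T, V be bounded linear invertible operators on a complex Hilbert space H with 0 < m < M and m‖Tx‖ ≤ ‖Vx‖ ≤ M‖Tx‖ for all x ∈ H. Then for every ν ∈ (0,1), in the operator order: T Ⓢ_ν V ≤ 2·((M^{2(ν+1)} − m^{2(ν+1)})/((ν+1)(M² − m²)))·|T|² − (M²−m²)⁻¹·[M^{2ν}(M²|T|² − |V|²) + m^{2ν}(|V|² − m²|T|²)]. -/

import Mathlib

/-!
Since `m² ≤ X ≤ M²`, the spectrum of `X` lies in `[m², M²]`, and there `s ^ ν` is bounded by the
function `2 L - ((M²)^ν (M² - s) + (m²)^ν (s - m²)) / (M² - m²)`, which is affine in `s`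
(`L` the integral mean of `t ^ ν` over `[m², M²]`). Monotonicity of the functional calculus turns
this into `X ^ ν ≤ α + β X`, and conjugating by `T` turns `1` into `|T|²` and `X` into `|V|²`.

The scalar bound holds for every concave continuous `f` on `[a, b]`: the graph of `f` lies above
the polygon through `(a, f a)`, `(s, f s)`, `(b, f b)`, so `∫ f` is at least the sum of the two
trapezoid areas `(f a + f s)(s - a)/2 + (f s + f b)(b - s)/2`.
-/

variable {H : Type*} [NormedAddCommGroup H] [InnerProductSpace ℂ H] [CompleteSpace H]

/-- `X = |VT⁻¹|² = (T*)⁻¹ V* V T⁻¹`. -/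
noncomputable def qX (V T : (H →L[ℂ] H)ˣ) : H →L[ℂ] H :=
  star (↑(T⁻¹) : H →L[ℂ] H) * (star (V : H →L[ℂ] H) * (V : H →L[ℂ] H)) * (↑(T⁻¹) : H →L[ℂ] H)

/-- The quadratic operator perspective `⊙_Φ(V,T) = T* Φ(X) T`. -/
noncomputable def qPersp (Φ : ℝ → ℝ) (V T : (H →L[ℂ] H)ˣ) : H →L[ℂ] H :=
  star (T : H →L[ℂ] H) * cfc Φ (qX V T) * (T : H →L[ℂ] H)

/-- `|T|² = T*T`. -/
noncomputable def modSq (T : (H →L[ℂ] H)ˣ) : H →L[ℂ] H :=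
  star (T : H →L[ℂ] H) * (T : H →L[ℂ] H)

open Set intervalIntegral

theorem ConcaveOn.chord_le {f : ℝ → ℝ} {u v t : ℝ} (hf : ConcaveOn ℝ (Icc u v) f)
    (ht : t ∈ Icc u v) : f u + (t - u) * ((f v - f u) / (v - u)) ≤ f t := by
  rcases eq_or_lt_of_le (ht.1.trans ht.2) with rfl | huv
  · obtain rfl : t = u := le_antisymm ht.2 ht.1
    simp
  have hvu : 0 < v - u := sub_pos.2 huv
  have h₁ : 0 ≤ (v - t) / (v - u) := div_nonneg (sub_nonneg.2 ht.2) hvu.le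
  have h₂ : 0 ≤ (t - u) / (v - u) := div_nonneg (sub_nonneg.2 ht.1) hvu.le
  have hcomb : ((v - t) / (v - u)) • u + ((t - u) / (v - u)) • v = t := by
    simp only [smul_eq_mul]; field_simp; ring
  have hconc :=
    hf.2 (left_mem_Icc.2 huv.le) (right_mem_Icc.2 huv.le) h₁ h₂ (by field_simp; ring)
  rw [hcomb, smul_eq_mul, smul_eq_mul] at hconc
  calc f u + (t - u) * ((f v - f u) / (v - u))
      = (v - t) / (v - u) * f u + (t - u) / (v - u) * f v := by field_simp; ring
    _ ≤ f t := hconc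

theorem integral_const_add_sub_mul (u v c k : ℝ) :
    ∫ t in u..v, (c + (t - u) * k) = (c + (v - u) / 2 * k) * (v - u) := by
  rw [integral_add intervalIntegrable_const (Continuous.intervalIntegrable (by fun_prop) _ _),
    integral_mul_const, integral_comp_sub_right (fun t => t)]
  simp only [integral_const, smul_eq_mul, integral_id, sub_self]
  ring

theorem ConcaveOn.trapezoid_le_integral {f : ℝ → ℝ} {u v : ℝ} (huv : u ≤ v)
    (hf : ConcaveOn ℝ (Icc u v) f) (hc : ContinuousOn f (Icc u v)) :
    (f u + f v) / 2 * (v - u) ≤ ∫ t in u..v, f t := by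
  have hchord : (f u + f v) / 2 * (v - u) =
      ∫ t in u..v, (f u + (t - u) * ((f v - f u) / (v - u))) := by
    rw [integral_const_add_sub_mul]
    rcases huv.eq_or_lt with rfl | huv
    · simp
    · field_simp [(sub_pos.2 huv).ne']
      ring
  rw [hchord]
  exact integral_mono_on huv (Continuous.intervalIntegrable (by fun_prop) _ _)
    (hc.intervalIntegrable_of_Icc huv) fun t ht => hf.chord_le ht

theorem ConcaveOn.le_two_mul_average_sub {f : ℝ → ℝ} {a b s : ℝ} (hab : a < b)
    (hf : ConcaveOn ℝ (Icc a b) f) (hc : ContinuousOn f (Icc a b)) (hs : s ∈ Icc a b) :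
    f s ≤ 2 * ((b - a)⁻¹ * ∫ t in a..b, f t) - (b - a)⁻¹ * (f b * (b - s) + f a * (s - a)) := by
  have hcas := hc.mono (Icc_subset_Icc_right hs.2)
  have hcsb := hc.mono (Icc_subset_Icc_left hs.1)
  have hleft := (hf.subset (Icc_subset_Icc_right hs.2) (convex_Icc a s)).trapezoid_le_integral
    hs.1 hcas
  have hright := (hf.subset (Icc_subset_Icc_left hs.1) (convex_Icc s b)).trapezoid_le_integral
    hs.2 hcsb
  rw [← integral_add_adjacent_intervals (hcas.intervalIntegrable_of_Icc hs.1)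
    (hcsb.intervalIntegrable_of_Icc hs.2)]
  calc f s = (b - a)⁻¹ * (f s * (b - a)) := by field_simp [(sub_pos.2 hab).ne']
    _ ≤ (b - a)⁻¹ * (2 * ((∫ t in a..s, f t) + ∫ t in s..b, f t) -
          (f b * (b - s) + f a * (s - a))) := by
      gcongr
      linarith
    _ = _ := by ring

theorem Real.rpow_le_two_mul_rpow_mean_sub {a b ν s : ℝ} (ha : 0 ≤ a) (hab : a < b)
    (hν : ν ∈ Icc (0 : ℝ) 1) (hs : s ∈ Icc a b) :
    s ^ ν ≤ 2 * ((b ^ (ν + 1) - a ^ (ν + 1)) / ((ν + 1) * (b - a))) -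
      (b - a)⁻¹ * (b ^ ν * (b - s) + a ^ ν * (s - a)) := by
  have hconc :=
    (Real.concaveOn_rpow hν.1 hν.2).subset (fun x hx => ha.trans hx.1) (convex_Icc a b)
  have hcont : ContinuousOn (fun t : ℝ => t ^ ν) (Icc a b) := fun t _ =>
    (Real.continuousAt_rpow_const t ν (Or.inr hν.1)).continuousWithinAt
  have := hconc.le_two_mul_average_sub hab hcont hs
  rwa [integral_rpow (Or.inl (by linarith [hν.1])), inv_mul_eq_div, div_div] at this

theorem cfc_le_algebraMap_add_smul {A : Type*} [CStarAlgebra A] [PartialOrder A]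
    [StarOrderedRing A] {a : A} {f : ℝ → ℝ} {α β : ℝ} (hf : ContinuousOn f (spectrum ℝ a))
    (h : ∀ s ∈ spectrum ℝ a, f s ≤ α + β * s) (ha : IsSelfAdjoint a := by cfc_tac) :
    cfc f a ≤ algebraMap ℝ A α + β • a := by
  calc cfc f a ≤ cfc (fun s => α + β * s) a := cfc_mono h
    _ = algebraMap ℝ A α + β • a := by
      rw [cfc_add (a := a) (fun _ => α) (β * ·), cfc_const α a, cfc_const_mul_id β a]

namespace ContinuousLinearMap

variable {E : Type*} [NormedAddCommGroup E] [InnerProductSpace ℂ E]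

theorem re_inner_star_mul_self_apply [CompleteSpace E] (W : E →L[ℂ] E) (x : E) :
    RCLike.re (inner ℂ ((star W * W) x) x) = ‖W x‖ ^ 2 := by
  rw [apply_norm_sq_eq_inner_adjoint_left, star_eq_adjoint]
  rfl

theorem re_inner_algebraMap_apply (c : ℝ) (x : E) :
    RCLike.re (inner ℂ (algebraMap ℝ (E →L[ℂ] E) c x) x) = c * ‖x‖ ^ 2 := by
  rw [Algebra.algebraMap_eq_smul_one, smul_apply, one_apply_eq_self, ← Complex.coe_smul,
    inner_smul_left, inner_self_eq_norm_sq_to_K, Complex.conj_ofReal]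
  exact_mod_cast Complex.re_ofReal_mul c _

theorem algebraMap_le_star_mul_self [CompleteSpace E] {W : E →L[ℂ] E} {c : ℝ}
    (h : ∀ x, c * ‖x‖ ^ 2 ≤ ‖W x‖ ^ 2) :
    algebraMap ℝ (E →L[ℂ] E) c ≤ star W * W := by
  refine isPositive_def'.2
    ⟨(IsSelfAdjoint.star_mul_self W).sub (.algebraMap _ (.all c)), fun x => ?_⟩
  rw [reApplyInnerSelf_apply, sub_apply, inner_sub_left, map_sub, re_inner_star_mul_self_apply,
    re_inner_algebraMap_apply, sub_nonneg]
  exact h x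

theorem star_mul_self_le_algebraMap [CompleteSpace E] {W : E →L[ℂ] E} {c : ℝ}
    (h : ∀ x, ‖W x‖ ^ 2 ≤ c * ‖x‖ ^ 2) :
    star W * W ≤ algebraMap ℝ (E →L[ℂ] E) c := by
  refine isPositive_def'.2
    ⟨(IsSelfAdjoint.algebraMap _ (.all c)).sub (.star_mul_self W), fun x => ?_⟩
  rw [reApplyInnerSelf_apply, sub_apply, inner_sub_left, map_sub, re_inner_star_mul_self_apply,
    re_inner_algebraMap_apply, sub_nonneg]
  exact h x

end ContinuousLinearMap

theorem Units.apply_inv_apply {F α : Type*} [FunLike F α α] [Monoid F] [IsOneApplyEqSelf F α]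
    [IsMulApplyEqComp F α] (u : Fˣ) (x : α) : (u : F) ((↑u⁻¹ : F) x) = x := by
  rw [← mul_apply_eq_comp, u.mul_inv, one_apply_eq_self]

theorem qX_eq_star_mul_self (V T : (H →L[ℂ] H)ˣ) :
    qX V T = star ((V : H →L[ℂ] H) * ↑T⁻¹) * ((V : H →L[ℂ] H) * ↑T⁻¹) := by
  simp only [qX, star_mul, mul_assoc]

theorem isSelfAdjoint_qX (V T : (H →L[ℂ] H)ˣ) : IsSelfAdjoint (qX V T) :=
  qX_eq_star_mul_self V T ▸ .star_mul_self _

theorem star_mul_qX_mul (V T : (H →L[ℂ] H)ˣ) :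
    star (T : H →L[ℂ] H) * qX V T * T = modSq V := by
  have hW : (V : H →L[ℂ] H) * ↑T⁻¹ * T = V := by rw [mul_assoc, T.inv_mul, mul_one]
  calc star (T : H →L[ℂ] H) * qX V T * T
      = star ((V : H →L[ℂ] H) * ↑T⁻¹ * T) * ((V : H →L[ℂ] H) * ↑T⁻¹ * T) := by
        rw [qX_eq_star_mul_self, star_mul _ (T : H →L[ℂ] H)]
        simp only [mul_assoc]
    _ = modSq V := by rw [hW, modSq]

theorem spectrum_qX_subset_Icc {V T : (H →L[ℂ] H)ˣ} {m M : ℝ} (hm : 0 ≤ m)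
    (hTV : ∀ x : H, m * ‖(T : H →L[ℂ] H) x‖ ≤ ‖(V : H →L[ℂ] H) x‖ ∧
      ‖(V : H →L[ℂ] H) x‖ ≤ M * ‖(T : H →L[ℂ] H) x‖) :
    spectrum ℝ (qX V T) ⊆ Icc (m ^ 2) (M ^ 2) := by
  have hW : ∀ y, m * ‖y‖ ≤ ‖((V : H →L[ℂ] H) * ↑T⁻¹) y‖ ∧
      ‖((V : H →L[ℂ] H) * ↑T⁻¹) y‖ ≤ M * ‖y‖ := fun y => by
    simpa only [mul_apply_eq_comp, Units.apply_inv_apply] using hTV ((↑T⁻¹ : H →L[ℂ] H) y)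
  have hlow := ContinuousLinearMap.algebraMap_le_star_mul_self fun y => by
    rw [← mul_pow]; exact pow_le_pow_left₀ (by positivity) (hW y).1 2
  have hup := ContinuousLinearMap.star_mul_self_le_algebraMap fun y => by
    rw [← mul_pow]; exact pow_le_pow_left₀ (norm_nonneg _) (hW y).2 2
  rw [← qX_eq_star_mul_self] at hlow hup
  exact fun s hs => ⟨(algebraMap_le_iff_le_spectrum (isSelfAdjoint_qX V T)).1 hlow s hs,
    (le_algebraMap_iff_spectrum_le (isSelfAdjoint_qX V T)).1 hup s hs⟩

theorem qPersp_le_smul_modSq_add_smul_modSq {Φ : ℝ → ℝ} {V T : (H →L[ℂ] H)ˣ} {α β : ℝ}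
    (hΦ : ContinuousOn Φ (spectrum ℝ (qX V T)))
    (h : ∀ s ∈ spectrum ℝ (qX V T), Φ s ≤ α + β * s) :
    qPersp Φ V T ≤ α • modSq T + β • modSq V := by
  have := star_left_conjugate_le_conjugate
    (cfc_le_algebraMap_add_smul hΦ h (isSelfAdjoint_qX V T)) (T : H →L[ℂ] H)
  rwa [Algebra.algebraMap_eq_smul_one, mul_add, add_mul, mul_smul_comm, smul_mul_assoc, mul_one,
    mul_smul_comm, smul_mul_assoc, star_mul_qX_mul] at this

theorem stmt16 (T V : (H →L[ℂ] H)ˣ) (m M : ℝ) (hm : 0 < m) (hmM : m < M)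
    (hTV : ∀ x : H, m * ‖(T : H →L[ℂ] H) x‖ ≤ ‖(V : H →L[ℂ] H) x‖ ∧ ‖(V : H →L[ℂ] H) x‖ ≤ M * ‖(T : H →L[ℂ] H) x‖)
    (ν : ℝ) (hν : ν ∈ Set.Ioo (0 : ℝ) 1) :
    qPersp (fun s : ℝ => s ^ ν) V T ≤
      (2 * ((M ^ (2 * (ν + 1)) - m ^ (2 * (ν + 1))) / ((ν + 1) * (M ^ 2 - m ^ 2)))) • modSq T -
        (M ^ 2 - m ^ 2)⁻¹ •
          ((M ^ (2 * ν)) • ((M ^ 2 : ℝ) • modSq T - modSq V) +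
            (m ^ (2 * ν)) • (modSq V - (m ^ 2 : ℝ) • modSq T)) := by
  have hspec := spectrum_qX_subset_Icc hm.le hTV
  have hsq : m ^ 2 < M ^ 2 := pow_lt_pow_left₀ hmM hm.le two_ne_zero
  set a := m ^ 2
  set b := M ^ 2
  have hpt : ∀ s ∈ spectrum ℝ (qX V T), s ^ ν ≤
      (2 * ((b ^ (ν + 1) - a ^ (ν + 1)) / ((ν + 1) * (b - a))) -
        (b - a)⁻¹ * (b ^ ν * b - a ^ ν * a)) + (b - a)⁻¹ * (b ^ ν - a ^ ν) * s := fun s hs =>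
    (Real.rpow_le_two_mul_rpow_mean_sub (by positivity) hsq (Ioo_subset_Icc_self hν)
      (hspec hs)).trans_eq (by ring)
  have hcont : ContinuousOn (fun s : ℝ => s ^ ν) (spectrum ℝ (qX V T)) := fun s _ =>
    (Real.continuousAt_rpow_const s ν (Or.inr hν.1.le)).continuousWithinAt
  refine (qPersp_le_smul_modSq_add_smul_modSq hcont hpt).trans_eq ?_
  simp only [Real.rpow_mul hm.le, Real.rpow_mul (hm.trans hmM).le, Real.rpow_two]
  module
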